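/- Let m, d, ħ > 0, v ∈ ℝ and t ∈ ℝ, and let Ψ(r,t; m,v,d) be the free Gaussian wave packet. Then the position expectation value is ∫_ℝ r |Ψ(r,t; m,v,d)|² dr = t·v, and its variance spreads according to σ²(t) := ∫_ℝ (r − tv)² |Ψ(r,t; m,v,d)|² dr = d² + t²ħ²/(4d²m²). In particular, the spreading of the wave packet is negligible, σ²(t) ≤ 2d², for all times |t| ≤ 2d²m/ħ. -/

import Mathlib

open MeasureTheory

noncomputable section

/-- The free Gaussian wave packet `Ψ(r,t; m,v,d)` with reduced Planck constant `hbar`;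
the square root is the principal branch. -/
noncomputable def gaussPacket (hbar m v d : ℝ) (r t : ℝ) : ℂ :=
  (((2 / Real.pi) ^ ((1 : ℝ) / 4) : ℝ) : ℂ) *
    (((d * m : ℝ) : ℂ) / ((2 * d ^ 2 * m : ℝ) + Complex.I * t * hbar)) ^ ((1 : ℂ) / 2) *
    Complex.exp ((-(d ^ 2 * m ^ 2 * (r - t * v) ^ 2) /
      (4 * d ^ 4 * m ^ 2 + t ^ 2 * hbar ^ 2) : ℝ) : ℂ) *
    Complex.exp (Complex.I *
      (((m * t * r ^ 2 * hbar ^ 2 - 4 * d ^ 4 * m ^ 3 * v * (t * v - 2 * r)) /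
        (8 * d ^ 4 * m ^ 2 * hbar + 2 * t ^ 2 * hbar ^ 3) : ℝ) : ℂ))

/-! The squared modulus of `Ψ(·, t)` is exactly the normal density with mean `t v` and variance
`σ²(t) = d² + t²ħ²/(4d²m²)`: the principal square root contributes `√|z|`, the real Gaussian
factor is the density's exponential, and the second exponential is a pure phase. Both moments are
then the mean and the variance of `gaussianReal (t v) σ²(t)`. -/

open Real ProbabilityTheory NNReal

namespace ProbabilityTheory

variable {μ : ℝ} {v : ℝ≥0}

lemma integral_mul_gaussianPDFReal (hv : v ≠ 0) : ∫ x, x * gaussianPDFReal μ v x = μ := by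
  simpa [integral_gaussianReal_eq_integral_smul hv, mul_comm] using
    integral_id_gaussianReal (μ := μ) (v := v)

lemma integral_sq_sub_mul_gaussianPDFReal (hv : v ≠ 0) :
    ∫ x, (x - μ) ^ 2 * gaussianPDFReal μ v x = v := by
  have h := variance_fun_id_gaussianReal (μ := μ) (v := v)
  rw [variance_eq_integral measurable_id'.aemeasurable, integral_id_gaussianReal,
    integral_gaussianReal_eq_integral_smul hv] at h
  simpa [mul_comm] using h

end ProbabilityTheory

lemma norm_gaussPacket (hbar m v d r t : ℝ) :
    ‖gaussPacket hbar m v d r t‖ =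
      (2 / π) ^ (1 / 4 : ℝ) *
        ‖((d * m : ℝ) : ℂ) / ((2 * d ^ 2 * m : ℝ) + Complex.I * t * hbar)‖ ^ (1 / 2 : ℝ) *
        Real.exp (-(d ^ 2 * m ^ 2 * (r - t * v) ^ 2) / (4 * d ^ 4 * m ^ 2 + t ^ 2 * hbar ^ 2)) := by
  rw [gaussPacket, norm_mul, norm_mul, norm_mul, Complex.norm_exp_I_mul_ofReal, mul_one,
    Complex.norm_exp_ofReal, Complex.norm_of_nonneg (by positivity),
    show (1 : ℂ) / 2 = ((1 / 2 : ℝ) : ℂ) by push_cast; rfl, Complex.norm_cpow_real]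

def gaussPacketVariance (hbar m d t : ℝ) : ℝ≥0 :=
  ⟨d ^ 2 + t ^ 2 * hbar ^ 2 / (4 * d ^ 2 * m ^ 2), by positivity⟩

lemma gaussPacketVariance_pos (hbar m t : ℝ) {d : ℝ} (hd : d ≠ 0) :
    0 < gaussPacketVariance hbar m d t :=
  NNReal.coe_pos.mp (by change 0 < d ^ 2 + _; positivity)

lemma gaussPacketVariance_le_two_mul_sq {hbar m d t : ℝ} (hhbar : 0 < hbar) (hm : 0 < m)
    (hd : 0 < d) (ht : |t| ≤ 2 * d ^ 2 * m / hbar) :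
    (gaussPacketVariance hbar m d t : ℝ) ≤ 2 * d ^ 2 := by
  have hth : |t * hbar| ≤ 2 * d ^ 2 * m := by
    rw [abs_mul, abs_of_pos hhbar, ← le_div_iff₀ hhbar]
    exact ht
  obtain ⟨hlo, hhi⟩ := abs_le.mp hth
  have hsq : (t * hbar) ^ 2 ≤ (2 * d ^ 2 * m) ^ 2 := sq_le_sq' hlo hhi
  have hspread : t ^ 2 * hbar ^ 2 / (4 * d ^ 2 * m ^ 2) ≤ d ^ 2 := by
    rw [div_le_iff₀ (by positivity)]
    linarith
  change d ^ 2 + t ^ 2 * hbar ^ 2 / (4 * d ^ 2 * m ^ 2) ≤ _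
  linarith

lemma norm_sq_gaussPacket (hbar : ℝ) {m d : ℝ} (hm : m ≠ 0) (hd : d ≠ 0) (v r t : ℝ) :
    ‖gaussPacket hbar m v d r t‖ ^ 2 =
      gaussianPDFReal (t * v) (gaussPacketVariance hbar m d t) r := by
  set A := 4 * d ^ 4 * m ^ 2 + t ^ 2 * hbar ^ 2
  have hA : 0 < A := by positivity
  have hz : ‖((d * m : ℝ) : ℂ) / ((2 * d ^ 2 * m : ℝ) + Complex.I * t * hbar)‖ =
      |d * m| / √A := by
    rw [show ((2 * d ^ 2 * m : ℝ) : ℂ) + Complex.I * t * hbar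
        = ((2 * d ^ 2 * m : ℝ) : ℂ) + ((t * hbar : ℝ) : ℂ) * Complex.I by push_cast; ring,
      norm_div, Complex.norm_real, Real.norm_eq_abs, Complex.norm_add_mul_I]
    congr 2
    ring
  have hσ : (gaussPacketVariance hbar m d t : ℝ) = A / (4 * d ^ 2 * m ^ 2) := by
    change d ^ 2 + t ^ 2 * hbar ^ 2 / (4 * d ^ 2 * m ^ 2) = _
    field_simp
    ring
  have hcoef : √(2 / π) * (|d * m| / √A) = (√(2 * π * (A / (4 * d ^ 2 * m ^ 2))))⁻¹ := by
    rw [← Real.sqrt_inv, ← Real.sqrt_sq_eq_abs, ← Real.sqrt_div' _ hA.le,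
      ← Real.sqrt_mul (by positivity)]
    congr 1
    field_simp
    ring
  have hexp : Real.exp (-(d ^ 2 * m ^ 2 * (r - t * v) ^ 2) / A) ^ 2
      = Real.exp (-(r - t * v) ^ 2 / (2 * (A / (4 * d ^ 2 * m ^ 2)))) := by
    rw [← Real.exp_nat_mul]
    congr 1
    field_simp
    ring
  rw [gaussianPDFReal, hσ, ← hcoef, ← hexp, norm_gaussPacket, hz, mul_pow, mul_pow,
    ← Real.rpow_natCast, ← Real.rpow_mul (by positivity), ← Real.rpow_natCast (_ ^ _),
    ← Real.rpow_mul (by positivity),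
    show (1 / 4 : ℝ) * (2 : ℕ) = 1 / 2 by norm_num, show (1 / 2 : ℝ) * (2 : ℕ) = 1 by norm_num,
    Real.rpow_one, ← Real.sqrt_eq_rpow]

/-- Position expectation value and spreading variance of the free Gaussian wave packet;
the spreading is negligible (`σ²(t) ≤ 2d²`) for `|t| ≤ 2d²m/ħ`. -/
theorem gaussPacket_spreading
    {hbar m d : ℝ} (hhbar : 0 < hbar) (hm : 0 < m) (hd : 0 < d) (v t : ℝ) :
    (∫ r : ℝ, r * ‖gaussPacket hbar m v d r t‖ ^ 2 = t * v) ∧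
    (∫ r : ℝ, (r - t * v) ^ 2 * ‖gaussPacket hbar m v d r t‖ ^ 2 =
      d ^ 2 + t ^ 2 * hbar ^ 2 / (4 * d ^ 2 * m ^ 2)) ∧
    (|t| ≤ 2 * d ^ 2 * m / hbar →
      ∫ r : ℝ, (r - t * v) ^ 2 * ‖gaussPacket hbar m v d r t‖ ^ 2 ≤
        2 * d ^ 2) := by
  have hσ := (gaussPacketVariance_pos hbar m t hd.ne').ne'
  simp_rw [norm_sq_gaussPacket hbar hm.ne' hd.ne']
  exact ⟨integral_mul_gaussianPDFReal hσ, integral_sq_sub_mul_gaussianPDFReal hσ,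
    fun ht => (integral_sq_sub_mul_gaussianPDFReal hσ).trans_le
      (gaussPacketVariance_le_two_mul_sq hhbar hm hd ht)⟩
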